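/- Set D = (λ1+λ2+λ3+λ4)(λ1−λ2)(λ1−λ3)(λ1−λ4), μ1 = 2(λ2+λ3)(λ2+λ4)(λ3+λ4)/D, μ2 = 1/D, and m' = −2(λ2² + λ3² + λ4² + λ2λ3 + λ2λ4 + λ3λ4)/D. Then for every (x1,x2,x3,y1,y2,y3) ∈ ℝ^6 the identity G1 = μ1·H + μ2·I + m'·C1 holds; in particular G1 is a linear combination of the constants of motion H, I, C1 of the so(4) free rigid body. -/
import Mathlib


noncomputable section

/-- Casimir `C1`. -/
def C1fun (p : Fin 6 → ℝ) : ℝ :=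
  (p 0 ^ 2 + p 1 ^ 2 + p 2 ^ 2 + p 3 ^ 2 + p 4 ^ 2 + p 5 ^ 2) / 2

/-- The Hamiltonian `H`. -/
def Hfun (l1 l2 l3 l4 : ℝ) (p : Fin 6 → ℝ) : ℝ :=
  (1/2) * (p 0 ^ 2 / (l2 + l3) + p 1 ^ 2 / (l1 + l3) + p 2 ^ 2 / (l1 + l2)
    + p 3 ^ 2 / (l1 + l4) + p 4 ^ 2 / (l2 + l4) + p 5 ^ 2 / (l3 + l4))

/-- Mishchenko's integral `I`. -/
def Ifun (l1 l2 l3 l4 : ℝ) (p : Fin 6 → ℝ) : ℝ :=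
  (l2^2 + l3^2) * p 0 ^ 2 + (l1^2 + l3^2) * p 1 ^ 2 + (l1^2 + l2^2) * p 2 ^ 2
    + (l1^2 + l4^2) * p 3 ^ 2 + (l2^2 + l4^2) * p 4 ^ 2 + (l3^2 + l4^2) * p 5 ^ 2

/-- The constant of motion `G1`. -/
def G1fun (l1 l2 l3 l4 : ℝ) (p : Fin 6 → ℝ) : ℝ :=
  p 1 ^ 2 / (l1^2 - l3^2) + p 2 ^ 2 / (l1^2 - l2^2) + p 3 ^ 2 / (l1^2 - l4^2)

set_option maxHeartbeats 2000000 in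
/-- `G1` is the explicit linear combination `μ1·H + μ2·I + m'·C1`. -/
theorem G1_linear_combination
    (l1 l2 l3 l4 : ℝ) (h12 : l2 < l1) (h23 : l3 < l2) (h34 : l4 < l3)
    (s12 : 0 < l1 + l2) (s13 : 0 < l1 + l3) (s14 : 0 < l1 + l4)
    (s23 : 0 < l2 + l3) (s24 : 0 < l2 + l4) (s34 : 0 < l3 + l4)
    (D μ1 μ2 m' : ℝ)
    (hD : D = (l1 + l2 + l3 + l4) * (l1 - l2) * (l1 - l3) * (l1 - l4))
    (hμ1 : μ1 = 2 * (l2 + l3) * (l2 + l4) * (l3 + l4) / D)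
    (hμ2 : μ2 = 1 / D)
    (hm' : m' = -(2 * (l2^2 + l3^2 + l4^2 + l2*l3 + l2*l4 + l3*l4)) / D)
    (p : Fin 6 → ℝ) :
    G1fun l1 l2 l3 l4 p =
      μ1 * Hfun l1 l2 l3 l4 p + μ2 * Ifun l1 l2 l3 l4 p + m' * C1fun p := by
  have hsum : 0 < l1 + l2 + l3 + l4 := by linarith
  have hD0 : D ≠ 0 := by
    rw [hD]
    have h : (0:ℝ) < (l1 + l2 + l3 + l4) * (l1 - l2) * (l1 - l3) * (l1 - l4) := by
      apply mul_pos (mul_pos (mul_pos hsum (by linarith)) (by linarith)) (by linarith)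
    exact ne_of_gt h
  have e12 : l1 + l2 ≠ 0 := ne_of_gt s12
  have e13 : l1 + l3 ≠ 0 := ne_of_gt s13
  have e14 : l1 + l4 ≠ 0 := ne_of_gt s14
  have e23 : l2 + l3 ≠ 0 := ne_of_gt s23
  have e24 : l2 + l4 ≠ 0 := ne_of_gt s24
  have e34 : l3 + l4 ≠ 0 := ne_of_gt s34
  have d12 : l1 - l2 ≠ 0 := by linarith
  have d13 : l1 - l3 ≠ 0 := by linarith
  have d14 : l1 - l4 ≠ 0 := by linarith
  have q12 : l1^2 - l2^2 ≠ 0 := by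
    have h : l1^2 - l2^2 = (l1 + l2) * (l1 - l2) := by ring
    rw [h]; exact mul_ne_zero e12 d12
  have q13 : l1^2 - l3^2 ≠ 0 := by
    have h : l1^2 - l3^2 = (l1 + l3) * (l1 - l3) := by ring
    rw [h]; exact mul_ne_zero e13 d13
  have q14 : l1^2 - l4^2 ≠ 0 := by
    have h : l1^2 - l4^2 = (l1 + l4) * (l1 - l4) := by ring
    rw [h]; exact mul_ne_zero e14 d14
  have c0 : (0:ℝ) = μ1 * ((1/2) * (1/(l2+l3))) + μ2 * (l2^2 + l3^2) + m' * (1/2) := by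
    rw [hμ1, hμ2, hm', hD] at *; field_simp; ring
  have c1 : 1/(l1^2 - l3^2) = μ1 * ((1/2) * (1/(l1+l3))) + μ2 * (l1^2 + l3^2) + m' * (1/2) := by
    rw [hμ1, hμ2, hm', hD] at *; field_simp; ring
  have c2 : 1/(l1^2 - l2^2) = μ1 * ((1/2) * (1/(l1+l2))) + μ2 * (l1^2 + l2^2) + m' * (1/2) := by
    rw [hμ1, hμ2, hm', hD] at *; field_simp; ring
  have c3 : 1/(l1^2 - l4^2) = μ1 * ((1/2) * (1/(l1+l4))) + μ2 * (l1^2 + l4^2) + m' * (1/2) := by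
    rw [hμ1, hμ2, hm', hD] at *; field_simp; ring
  have c4 : (0:ℝ) = μ1 * ((1/2) * (1/(l2+l4))) + μ2 * (l2^2 + l4^2) + m' * (1/2) := by
    rw [hμ1, hμ2, hm', hD] at *; field_simp; ring
  have c5 : (0:ℝ) = μ1 * ((1/2) * (1/(l3+l4))) + μ2 * (l3^2 + l4^2) + m' * (1/2) := by
    rw [hμ1, hμ2, hm', hD] at *; field_simp; ring
  simp only [G1fun, Hfun, Ifun, C1fun]
  linear_combination p 0 ^ 2 * c0 + p 1 ^ 2 * c1 + p 2 ^ 2 * c2 + p 3 ^ 2 * c3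
    + p 4 ^ 2 * c4 + p 5 ^ 2 * c5
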